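/- For sufficiently large k, the complete 4-ary tree with k levels admits no empty-ply drawing. Concretely, for all k ≥ 2^16 (k even), there is no straight-line drawing of the complete rooted tree in which every internal vertex has exactly 4 children and all leaves are at depth k, such that each ply-disk contains no vertex other than its center. -/

import Mathlib

/-!
Let `r₀` be the ply radius of the root. In an empty-ply drawing the ply radii of adjacent
vertices differ by a factor at most `2`, and every edge is at most twice as long as the ply
radius of each endpoint; so a vertex at depth `j` has ply radius at least `r₀ / 2 ^ j`.
Call a vertex capped if it and all its ancestors have ply radius at most `radiusCap (depth) * r₀`,
and escaping if its parent is capped but it is not. Capped and escaping vertices lie within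
`92 r₀` of the root and have ply radius at most `32 r₀`; the disks of half their ply radii are
disjoint, so the sum of their squared half radii is at most `(108 r₀) ^ 2`. On the other hand an
escaping vertex at depth `j` has ply radius above `2 ^ 8 r₀ / 2 ^ j`, so it weighs as much as
`2 ^ 16` capped vertices of its depth, while a leaf all of whose ancestors are capped collects a
capped vertex on each of its `k + 1 ≥ 2 ^ 16` levels. Distributing over the `4 ^ k` leaves, the
sum is at least `2 ^ 14 r₀ ^ 2 > (108 r₀) ^ 2`.
-/

open Real EuclideanGeometry Metric

noncomputable def plyRadius {V : Type*} (G : SimpleGraph V)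
    (pos : V → EuclideanSpace ℝ (Fin 2)) (v : V) : ℝ :=
  (1 / 2) * ⨆ w ∈ G.neighborSet v, dist (pos v) (pos w)

/-- A drawing is empty-ply if no ply-disk contains a vertex other than its center
in its interior. -/
def IsEmptyPly {V : Type*} (G : SimpleGraph V)
    (pos : V → EuclideanSpace ℝ (Fin 2)) : Prop :=
  ∀ u v : V, u ≠ v → plyRadius G pos v ≤ dist (pos u) (pos v)

/-- The complete rooted 4-ary tree with `k` levels: vertices are words over
`Fin 4` of length at most `k` (the root is the empty word, leaves are the words
of length exactly `k`), and a vertex is adjacent to its children. -/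
def T4 (k : ℕ) : SimpleGraph {l : List (Fin 4) // l.length ≤ k} :=
  SimpleGraph.fromRel (fun a b => ∃ x : Fin 4, b.1 = x :: a.1)

open Finset MeasureTheory Module

section Packing

variable {E : Type*} [NormedAddCommGroup E] [NormedSpace ℝ E] [FiniteDimensional ℝ E]
  [Nontrivial E]

theorem sum_pow_finrank_le_of_pairwiseDisjoint_ball {ι : Type*} {s : Finset ι} {c : ι → E}
    {r : ι → ℝ} {x : E} {R : ℝ} (hr : ∀ i ∈ s, 0 ≤ r i) (hR : 0 ≤ R)
    (hdisj : (s : Set ι).PairwiseDisjoint fun i => ball (c i) (r i))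
    (hsub : ∀ i ∈ s, ball (c i) (r i) ⊆ ball x R) :
    ∑ i ∈ s, r i ^ finrank ℝ E ≤ R ^ finrank ℝ E := by
  borelize E
  let μ : Measure E := Measure.addHaar
  have hvol : ∑ i ∈ s, μ (ball (c i) (r i)) ≤ μ (ball x R) := by
    rw [← measure_biUnion_finset hdisj fun i _ => measurableSet_ball]
    exact measure_mono (Set.iUnion₂_subset hsub)
  have hunit : μ (ball 0 1) ≠ 0 := (isOpen_ball.measure_pos μ (nonempty_ball.2 one_pos)).ne'
  rw [sum_congr rfl fun i hi => μ.addHaar_ball (c i) (hr i hi), μ.addHaar_ball x hR,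
    ← sum_mul, ENNReal.mul_le_mul_iff_left hunit measure_ball_lt_top.ne,
    ← ENNReal.ofReal_sum_of_nonneg fun i hi => pow_nonneg (hr i hi) _] at hvol
  exact (ENNReal.ofReal_le_ofReal_iff (pow_nonneg hR _)).1 hvol

end Packing

section Ply

variable {V : Type*} {G : SimpleGraph V} {pos : V → EuclideanSpace ℝ (Fin 2)}

theorem plyRadius_nonneg (v : V) : 0 ≤ plyRadius G pos v :=
  mul_nonneg (by norm_num) (Real.iSup_nonneg fun _ => Real.iSup_nonneg fun _ => dist_nonneg)

theorem dist_le_two_mul_plyRadius {v w : V} (hfin : (G.neighborSet v).Finite) (h : G.Adj v w) :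
    dist (pos v) (pos w) ≤ 2 * plyRadius G pos v := by
  have hbdd : BddAbove (⋃ u, Set.range fun (_ : u ∈ G.neighborSet v) => dist (pos v) (pos u)) :=
    (hfin.image fun u => dist (pos v) (pos u)).bddAbove.mono <| by
      rintro _ ⟨_, ⟨u, rfl⟩, ⟨hu, rfl⟩⟩
      exact ⟨u, hu, rfl⟩
  have := le_ciSup₂ (f := fun u (_ : u ∈ G.neighborSet v) => dist (pos v) (pos u)) hbdd w h
  rw [plyRadius]
  linarith

theorem plyRadius_pos_of_adj (hinj : Function.Injective pos) {v w : V}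
    (hfin : (G.neighborSet v).Finite) (h : G.Adj v w) : 0 < plyRadius G pos v := by
  have hedge := dist_le_two_mul_plyRadius (pos := pos) hfin h
  have hpos := dist_pos.2 (hinj.ne h.ne)
  linarith

namespace IsEmptyPly

theorem plyRadius_le_two_mul (hply : IsEmptyPly G pos) {v w : V}
    (hfin : (G.neighborSet w).Finite) (h : G.Adj v w) :
    plyRadius G pos v ≤ 2 * plyRadius G pos w :=
  calc plyRadius G pos v ≤ dist (pos w) (pos v) := hply w v h.ne.symm
    _ ≤ 2 * plyRadius G pos w := dist_le_two_mul_plyRadius hfin h.symm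

theorem disjoint_ball (hply : IsEmptyPly G pos) {u v : V} (huv : u ≠ v) :
    Disjoint (ball (pos u) (plyRadius G pos u / 2)) (ball (pos v) (plyRadius G pos v / 2)) := by
  apply ball_disjoint_ball
  have hv := hply u v huv
  have hu := hply v u huv.symm
  rw [dist_comm] at hu
  linarith

end IsEmptyPly

end Ply

/-- A unit mass flows down `k` levels, losing `B (j + 1)` between levels `j` and `j + 1`: what
stays is counted on each of the `k + 1 ≥ N` levels, what is lost is counted `N` times. -/
theorem le_sum_add_mul_of_forall_eq_add {G B : ℕ → ℝ} {N k : ℕ} (hG0 : G 0 = 1)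
    (hG : ∀ j, 0 ≤ G j) (hB : ∀ j, 0 ≤ B j) (hstep : ∀ j < k, G (j + 1) + B (j + 1) = G j)
    (hN : N ≤ k + 1) :
    N ≤ ∑ j ∈ range (k + 1), (G j + N * B j) := by
  have key : ∀ m ≤ k,
      (m + 1) * G m + N * (1 - G m) ≤ ∑ j ∈ range (m + 1), (G j + N * B j) := by
    intro m
    induction m with
    | zero =>
      intro _
      rw [zero_add, sum_range_one, hG0]
      push_cast
      nlinarith [hB 0, N.cast_nonneg (α := ℝ)]
    | succ m ih =>
      intro hm
      have hanti : G (m + 1) ≤ G m := by linarith [hB (m + 1), hstep m hm]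
      rw [sum_range_succ]
      push_cast
      nlinarith [ih (by omega), hstep m hm]
  have hN' : (N : ℝ) ≤ k + 1 := by exact_mod_cast hN
  nlinarith [key k le_rfl, hG k]

/-- The cap doubles up to depth `4`, as fast as ply radii can grow along an edge, so that no vertex
escapes before depth `5`; then it halves, so that its partial sums stay bounded (`capPath ≤ 92`)
while it stays `2 ^ 8` times above the smallest possible ply radius `r₀ / 2 ^ j`. -/
noncomputable def radiusCap (j : ℕ) : ℝ := if j ≤ 4 then 2 ^ j else 256 / 2 ^ j

noncomputable def capPath (j : ℕ) : ℝ := 2 * ∑ i ∈ range j, radiusCap (i + 1)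

theorem capPath_succ (j : ℕ) : capPath (j + 1) = capPath j + 2 * radiusCap (j + 1) := by
  rw [capPath, capPath, sum_range_succ, mul_add]

theorem radiusCap_zero : radiusCap 0 = 1 := by norm_num [radiusCap]

theorem radiusCap_nonneg (j : ℕ) : 0 ≤ radiusCap j := by
  unfold radiusCap; split_ifs <;> positivity

theorem radiusCap_succ_of_lt {j : ℕ} (hj : j < 4) : radiusCap (j + 1) = 2 * radiusCap j := by
  rw [radiusCap, radiusCap, if_pos (Nat.succ_le_of_lt hj), if_pos hj.le, pow_succ, mul_comm]

theorem radiusCap_of_four_le {j : ℕ} (hj : 4 ≤ j) : radiusCap j = 256 / 2 ^ j := by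
  unfold radiusCap
  split_ifs with h
  · obtain rfl : j = 4 := by omega
    norm_num
  · rfl

theorem radiusCap_le (j : ℕ) : radiusCap j ≤ 16 := by
  rcases le_total j 4 with hj | hj
  · rw [radiusCap, if_pos hj]
    calc (2 : ℝ) ^ j ≤ 2 ^ 4 := pow_le_pow_right₀ (by norm_num) hj
      _ = 16 := by norm_num
  · rw [radiusCap_of_four_le hj, div_le_iff₀ (by positivity)]
    calc (256 : ℝ) = 16 * 2 ^ 4 := by norm_num
      _ ≤ 16 * 2 ^ j := by gcongr; norm_num

theorem capPath_add_two_mul_radiusCap_le (j : ℕ) : capPath j + 2 * radiusCap j ≤ 92 := by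
  rcases le_total j 4 with hj | hj
  · interval_cases j <;> norm_num [capPath, radiusCap, sum_range_succ]
  · refine le_of_eq ?_
    induction j, hj using Nat.le_induction with
    | base => norm_num [capPath, radiusCap, sum_range_succ]
    | succ j hj ih =>
      have hhalf : radiusCap (j + 1) = radiusCap j / 2 := by
        rw [radiusCap_of_four_le hj, radiusCap_of_four_le (by omega), pow_succ, div_div]
      rw [capPath_succ, ← ih, hhalf]
      ring

namespace T4

abbrev Vertex (k : ℕ) := {l : List (Fin 4) // l.length ≤ k}

instance (k : ℕ) : Finite (Vertex k) := (List.finite_length_le (Fin 4) k).to_subtype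

variable {k : ℕ}

theorem finite_neighborSet (v : Vertex k) : ((T4 k).neighborSet v).Finite := Set.toFinite _

def root (k : ℕ) : Vertex k := ⟨[], Nat.zero_le k⟩

-- Truncated at the leaves, so that `child` is total.
def child (p : Vertex k) (x : Fin 4) : Vertex k :=
  if h : p.1.length < k then ⟨x :: p.1, h⟩ else p

def children (s : Finset (Vertex k)) : Finset (Vertex k) :=
  (s ×ˢ univ).image fun px => child px.1 px.2

theorem child_val {p : Vertex k} (hp : p.1.length < k) (x : Fin 4) :
    (child p x).1 = x :: p.1 := by
  rw [child, dif_pos hp]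

theorem adj_child {p : Vertex k} (hp : p.1.length < k) (x : Fin 4) : (T4 k).Adj p (child p x) := by
  refine (SimpleGraph.fromRel_adj _ _ _).2 ⟨fun h => ?_, Or.inl ⟨x, child_val hp x⟩⟩
  have := congrArg (List.length ∘ Subtype.val) h
  simp [child_val hp] at this

theorem card_children {s : Finset (Vertex k)} (hs : ∀ p ∈ s, p.1.length < k) :
    #(children s) = 4 * #s := by
  rw [children, card_image_of_injOn, card_product, card_univ, Fintype.card_fin, mul_comm]
  rintro ⟨p, x⟩ hpx ⟨q, y⟩ hqy h
  simp only [coe_product, Set.mem_prod, mem_coe] at hpx hqy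
  have := congrArg Subtype.val h
  simp only [child_val (hs p hpx.1), child_val (hs q hqy.1), List.cons.injEq] at this
  exact Prod.ext (Subtype.ext this.2) this.1

theorem exists_adj_of_mem_children {s : Finset (Vertex k)} (hs : ∀ p ∈ s, p.1.length < k)
    {v : Vertex k} (hv : v ∈ children s) :
    ∃ p ∈ s, (T4 k).Adj p v ∧ v.1.length = p.1.length + 1 := by
  obtain ⟨⟨p, x⟩, hpx, rfl⟩ := mem_image.1 hv
  have hp := hs p (mem_product.1 hpx).1
  exact ⟨p, (mem_product.1 hpx).1, adj_child hp x, by simp [child_val hp]⟩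

noncomputable def capped (r : Vertex k → ℝ) : ℕ → Finset (Vertex k)
  | 0 => {root k}
  | j + 1 => (children (capped r j)).filter fun v => r v ≤ radiusCap (j + 1) * r (root k)

noncomputable def escaping (r : Vertex k → ℝ) : ℕ → Finset (Vertex k)
  | 0 => ∅
  | j + 1 => (children (capped r j)).filter fun v => ¬ r v ≤ radiusCap (j + 1) * r (root k)

noncomputable def level (r : Vertex k → ℝ) (j : ℕ) : Finset (Vertex k) :=
  capped r j ∪ escaping r j

noncomputable def levels (r : Vertex k → ℝ) : Finset (Vertex k) :=
  (range (k + 1)).biUnion (level r)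

variable {r : Vertex k → ℝ}

theorem length_of_mem_capped {j : ℕ} (hj : j ≤ k) {v : Vertex k} (hv : v ∈ capped r j) :
    v.1.length = j := by
  induction j generalizing v with
  | zero => simp_all [capped, root]
  | succ j ih =>
    obtain ⟨p, hp, -, hlen⟩ := exists_adj_of_mem_children
      (fun p hp => (ih (by omega) hp).trans_lt hj) (mem_filter.1 hv).1
    rw [hlen, ih (by omega) hp]

theorem length_lt_of_mem_capped {j : ℕ} (hj : j < k) {v : Vertex k} (hv : v ∈ capped r j) :
    v.1.length < k :=
  (length_of_mem_capped hj.le hv).trans_lt hj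

theorem length_of_mem_level {j : ℕ} (hj : j ≤ k) {v : Vertex k} (hv : v ∈ level r j) :
    v.1.length = j := by
  rcases mem_union.1 hv with hv | hv
  · exact length_of_mem_capped hj hv
  · cases j with
    | zero => simp [escaping] at hv
    | succ j =>
      obtain ⟨p, hp, -, hlen⟩ := exists_adj_of_mem_children
        (fun p => length_lt_of_mem_capped hj) (mem_filter.1 hv).1
      rw [hlen, length_of_mem_capped (by omega) hp]

theorem card_capped_add_card_escaping {j : ℕ} (hj : j < k) :
    #(capped r (j + 1)) + #(escaping r (j + 1)) = 4 * #(capped r j) := by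
  rw [capped, escaping, card_filter_add_card_filter_not,
    card_children fun p => length_lt_of_mem_capped hj]

theorem pairwiseDisjoint_level :
    ((range (k + 1) : Finset ℕ) : Set ℕ).PairwiseDisjoint (level r) := by
  intro i hi j hj hij
  refine disjoint_left.2 fun v hvi hvj => hij ?_
  simp only [coe_range, Set.mem_Iio] at hi hj
  rw [← length_of_mem_level (by omega) hvi, length_of_mem_level (by omega) hvj]

theorem disjoint_capped_escaping (j : ℕ) : Disjoint (capped r j) (escaping r j) := by
  cases j with
  | zero => simp [escaping]
  | succ j => exact disjoint_filter_filter_not _ _ _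

theorem exists_capped_parent_of_mem_escaping {j : ℕ} (hj : j < k) {v : Vertex k}
    (hv : v ∈ escaping r (j + 1)) :
    ∃ p ∈ capped r j, (T4 k).Adj p v ∧ radiusCap (j + 1) * r (root k) < r v := by
  obtain ⟨hv, hlt⟩ := mem_filter.1 hv
  obtain ⟨p, hp, hadj, -⟩ := exists_adj_of_mem_children (fun p => length_lt_of_mem_capped hj) hv
  exact ⟨p, hp, hadj, not_le.1 hlt⟩

section Drawing

variable {pos : Vertex k → EuclideanSpace ℝ (Fin 2)}

local notation "ρ" => plyRadius (T4 k) pos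

theorem plyRadius_le_of_mem_capped {j : ℕ} {v : Vertex k} (hv : v ∈ capped ρ j) :
    ρ v ≤ radiusCap j * ρ (root k) := by
  cases j with
  | zero => simp_all [capped, radiusCap_zero]
  | succ j => exact (mem_filter.1 hv).2

theorem div_two_pow_le_of_mem_capped (hply : IsEmptyPly (T4 k) pos) {j : ℕ} (hj : j ≤ k)
    {v : Vertex k} (hv : v ∈ capped ρ j) : ρ (root k) / 2 ^ j ≤ ρ v := by
  induction j generalizing v with
  | zero => simp_all [capped]
  | succ j ih =>
    obtain ⟨p, hp, hadj, -⟩ := exists_adj_of_mem_children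
      (fun p => length_lt_of_mem_capped hj) (mem_filter.1 hv).1
    have := hply.plyRadius_le_two_mul (finite_neighborSet v) hadj
    rw [pow_succ, ← div_div]
    linarith [ih (by omega) hp]

theorem dist_root_le_of_mem_capped {j : ℕ} (hj : j ≤ k) {v : Vertex k}
    (hv : v ∈ capped ρ j) :
    dist (pos (root k)) (pos v) ≤ capPath j * ρ (root k) := by
  induction j generalizing v with
  | zero => simp_all [capped, capPath]
  | succ j ih =>
    obtain ⟨p, hp, hadj, -⟩ := exists_adj_of_mem_children
      (fun p => length_lt_of_mem_capped hj) (mem_filter.1 hv).1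
    have hedge := dist_le_two_mul_plyRadius (pos := pos) (finite_neighborSet v) hadj.symm
    have hcap := plyRadius_le_of_mem_capped hv
    calc dist (pos (root k)) (pos v) ≤ dist (pos (root k)) (pos p) + dist (pos v) (pos p) :=
          dist_triangle_right _ _ _
      _ ≤ capPath (j + 1) * ρ (root k) := by
          rw [capPath_succ]
          linarith [ih (by omega) hp]

theorem plyRadius_le_of_mem_escaping (hply : IsEmptyPly (T4 k) pos) {j : ℕ} (hj : j < k)
    {v : Vertex k} (hv : v ∈ escaping ρ (j + 1)) :
    ρ v ≤ 2 * (radiusCap j * ρ (root k)) := by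
  obtain ⟨p, hp, hadj, -⟩ := exists_capped_parent_of_mem_escaping hj hv
  exact (hply.plyRadius_le_two_mul (finite_neighborSet p) hadj.symm).trans
    (by linarith [plyRadius_le_of_mem_capped hp])

theorem dist_root_le_of_mem_escaping {j : ℕ} (hj : j < k) {v : Vertex k}
    (hv : v ∈ escaping ρ (j + 1)) :
    dist (pos (root k)) (pos v) ≤ (capPath j + 2 * radiusCap j) * ρ (root k) := by
  obtain ⟨p, hp, hadj, -⟩ := exists_capped_parent_of_mem_escaping hj hv
  have hedge := dist_le_two_mul_plyRadius (pos := pos) (finite_neighborSet p) hadj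
  calc dist (pos (root k)) (pos v) ≤ dist (pos (root k)) (pos p) + dist (pos p) (pos v) :=
        dist_triangle _ _ _
    _ ≤ _ := by
        linarith [dist_root_le_of_mem_capped hj.le hp, plyRadius_le_of_mem_capped hp]

theorem lt_plyRadius_of_mem_escaping (hply : IsEmptyPly (T4 k) pos) {j : ℕ} (hj : j ≤ k)
    {v : Vertex k} (hv : v ∈ escaping ρ j) : 256 * ρ (root k) / 2 ^ j < ρ v := by
  cases j with
  | zero => simp [escaping] at hv
  | succ j =>
    obtain ⟨-, -, -, hlt⟩ := exists_capped_parent_of_mem_escaping hj hv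
    rcases lt_or_ge j 4 with hj4 | hj4
    · rw [radiusCap_succ_of_lt hj4] at hlt
      linarith [plyRadius_le_of_mem_escaping hply hj hv]
    · rwa [radiusCap_of_four_le (by omega), div_mul_eq_mul_div] at hlt

theorem ball_subset_of_mem_level (hply : IsEmptyPly (T4 k) pos) {j : ℕ} (hj : j ≤ k)
    {v : Vertex k} (hv : v ∈ level ρ j) :
    ball (pos v) (ρ v / 2) ⊆ ball (pos (root k)) (108 * ρ (root k)) := by
  refine ball_subset_ball' ?_
  have hr0 := plyRadius_nonneg (G := T4 k) (pos := pos) (root k)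
  rw [dist_comm]
  rcases mem_union.1 hv with hv | hv
  · have hcap := mul_le_mul_of_nonneg_right (radiusCap_le j) hr0
    have hpath : capPath j ≤ 92 := by
      linarith [capPath_add_two_mul_radiusCap_le j, radiusCap_nonneg j]
    replace hpath := mul_le_mul_of_nonneg_right hpath hr0
    linarith [plyRadius_le_of_mem_capped hv, dist_root_le_of_mem_capped hj hv]
  · cases j with
    | zero => simp [escaping] at hv
    | succ j =>
      have hcap := mul_le_mul_of_nonneg_right (radiusCap_le j) hr0
      have hpath := mul_le_mul_of_nonneg_right (capPath_add_two_mul_radiusCap_le j) hr0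
      linarith [plyRadius_le_of_mem_escaping hply hj hv, dist_root_le_of_mem_escaping hj hv]

theorem sum_sq_le_of_isEmptyPly (hply : IsEmptyPly (T4 k) pos) :
    ∑ v ∈ levels ρ, (ρ v / 2) ^ 2 ≤ (108 * ρ (root k)) ^ 2 := by
  have := sum_pow_finrank_le_of_pairwiseDisjoint_ball (s := levels ρ) (c := pos)
    (r := fun v => ρ v / 2) (x := pos (root k)) (R := 108 * ρ (root k))
    (fun v _ => div_nonneg (plyRadius_nonneg v) zero_le_two)
    (mul_nonneg (by norm_num) (plyRadius_nonneg (root k)))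
    (fun u _ v _ huv => hply.disjoint_ball huv)
    (fun v hv => by
      obtain ⟨j, hj, hv⟩ := mem_biUnion.1 hv
      exact ball_subset_of_mem_level hply (Nat.lt_succ_iff.1 (mem_range.1 hj)) hv)
  rwa [finrank_euclideanSpace_fin] at this

theorem card_level_mul_le_sum_sq (hply : IsEmptyPly (T4 k) pos) {j : ℕ} (hj : j ≤ k) :
    (#(capped ρ j) + 2 ^ 16 * #(escaping ρ j)) / 4 ^ j * (ρ (root k) ^ 2 / 4) ≤
      ∑ v ∈ level ρ j, (ρ v / 2) ^ 2 := by
  set r0 := ρ (root k)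
  have hr0 : 0 ≤ r0 := plyRadius_nonneg _
  have hcapped := card_nsmul_le_sum (capped ρ j) (fun v => (ρ v / 2) ^ 2) ((r0 / 2 ^ j / 2) ^ 2)
    fun v hv =>
      pow_le_pow_left₀ (by positivity)
        (div_le_div_of_nonneg_right (div_two_pow_le_of_mem_capped hply hj hv) zero_le_two) 2
  have hescaping := card_nsmul_le_sum (escaping ρ j) (fun v => (ρ v / 2) ^ 2)
    ((256 * r0 / 2 ^ j / 2) ^ 2) fun v hv =>
      pow_le_pow_left₀ (by positivity)
        (div_le_div_of_nonneg_right (lt_plyRadius_of_mem_escaping hply hj hv).le zero_le_two) 2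
  have h4 : (4 : ℝ) ^ j = (2 ^ j) ^ 2 := by rw [sq, ← mul_pow]; norm_num
  rw [nsmul_eq_mul] at hcapped hescaping
  rw [level, sum_union (disjoint_capped_escaping j)]
  calc _ = #(capped ρ j) * (r0 / 2 ^ j / 2) ^ 2 +
        #(escaping ρ j) * (256 * r0 / 2 ^ j / 2) ^ 2 := by
        rw [h4]; field_simp; ring
    _ ≤ _ := add_le_add hcapped hescaping

theorem le_sum_sq_of_isEmptyPly (hply : IsEmptyPly (T4 k) pos) (hk : 2 ^ 16 ≤ k + 1) :
    2 ^ 14 * ρ (root k) ^ 2 ≤ ∑ v ∈ levels ρ, (ρ v / 2) ^ 2 := by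
  have hcount := le_sum_add_mul_of_forall_eq_add (N := 2 ^ 16) (k := k)
    (G := fun j => #(capped ρ j) / 4 ^ j) (B := fun j => #(escaping ρ j) / 4 ^ j)
    (by simp [capped]) (fun j => by positivity) (fun j => by positivity)
    (fun j hj => by
      rw [← add_div, ← Nat.cast_add, card_capped_add_card_escaping hj, pow_succ]
      push_cast
      field_simp)
    hk
  calc 2 ^ 14 * ρ (root k) ^ 2 = 2 ^ 16 * (ρ (root k) ^ 2 / 4) := by ring
    _ ≤ (∑ j ∈ range (k + 1), (#(capped ρ j) / 4 ^ j + 2 ^ 16 * (#(escaping ρ j) / 4 ^ j) : ℝ)) *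
          (ρ (root k) ^ 2 / 4) := by gcongr; exact_mod_cast hcount
    _ = ∑ j ∈ range (k + 1), (#(capped ρ j) + 2 ^ 16 * #(escaping ρ j)) / 4 ^ j *
          (ρ (root k) ^ 2 / 4) := by
        rw [sum_mul]
        congr! 1
        ring
    _ ≤ ∑ j ∈ range (k + 1), ∑ v ∈ level ρ j, (ρ v / 2) ^ 2 :=
        sum_le_sum fun j hj => card_level_mul_le_sum_sq hply (Nat.lt_succ_iff.1 (mem_range.1 hj))
    _ = ∑ v ∈ levels ρ, (ρ v / 2) ^ 2 := (sum_biUnion pairwiseDisjoint_level).symm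

end Drawing

end T4

theorem stmt14_general (k : ℕ) (hk : 2 ^ 16 ≤ k) :
    ¬ ∃ pos : {l : List (Fin 4) // l.length ≤ k} → EuclideanSpace ℝ (Fin 2),
        Function.Injective pos ∧ IsEmptyPly (T4 k) pos := by
  rintro ⟨pos, hinj, hply⟩
  have hroot : 0 < plyRadius (T4 k) pos (T4.root k) :=
    plyRadius_pos_of_adj hinj (T4.finite_neighborSet _)
      (T4.adj_child (show [].length < k by simp; omega) 0)
  have hupper := T4.sum_sq_le_of_isEmptyPly hply
  have hlower := T4.le_sum_sq_of_isEmptyPly hply (by omega)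
  nlinarith

theorem stmt14 (k : ℕ) (hk : 2 ^ 16 ≤ k) (hke : Even k) :
    ¬ ∃ pos : {l : List (Fin 4) // l.length ≤ k} → EuclideanSpace ℝ (Fin 2),
        Function.Injective pos ∧ IsEmptyPly (T4 k) pos :=
  stmt14_general k hk
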